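/- Let (V, ⋆) be a K-algebra. Every subspace U satisfies U ⊆ U ⊗ U (contractivity of the fusion on subspaces) if and only if V is pseudo-contractive: for every u ∈ V there exists α ∈ K with u = α • (u ⋆ u). -/

import Mathlib

namespace Submodule

variable {R M P : Type*} [CommSemiring R] [AddCommMonoid M] [AddCommMonoid P] [Module R M]
  [Module R P]

theorem map₂_span_singleton_span_singleton (f : M →ₗ[R] M →ₗ[R] P) (u v : M) :
    map₂ f (R ∙ u) (R ∙ v) = R ∙ f u v := by
  rw [map₂_span_span, Set.image2_singleton]

theorem forall_le_map₂_self_iff (f : M →ₗ[R] M →ₗ[R] M) :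
    (∀ U : Submodule R M, U ≤ map₂ f U U) ↔ ∀ u : M, u ∈ R ∙ f u u := by
  refine ⟨fun h u => ?_, fun h U u hu => ?_⟩
  · simpa only [map₂_span_singleton_span_singleton] using
      h (R ∙ u) (mem_span_singleton_self u)
  · exact (span_singleton_le_iff_mem _ _).mpr (apply_mem_map₂ f hu hu) (h u)

end Submodule

/-- fusion is contractive iff the K-algebra is pseudo-contractive. -/
theorem fusion_contractive_iff_pseudoContractive {K V : Type*} [Field K] [AddCommGroup V] [Module K V]
    (star : V →ₗ[K] V →ₗ[K] V) :
    (∀ U : Submodule K V,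
        U ≤ Submodule.span K (Set.image2 (fun u w => star u w) (U : Set V) (U : Set V))) ↔
      (∀ u : V, ∃ α : K, u = α • (star u u)) := by
  simp only [← Submodule.map₂_eq_span_image2, Submodule.forall_le_map₂_self_iff,
    Submodule.mem_span_singleton, eq_comm]
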